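/- Fix a moment–quantile uncertainty set 𝓕 on a finite value set G (nonempty) with OPT(F) > 0 for all F ∈ 𝓕. Then the maximin ratio θ*_Ratio(𝓕) = max_Φ min_{F∈𝓕} Ratio(Φ,F) equals the supremum of r over all tuples (r, φ, α, β, γ), where φ : G → ℝ satisfies φ(s) ≥ 0 and Σ_{s∈G} φ(s) = 1, α : I × G → ℝ, β : J × G → ℝ, γ : G → ℝ, subject to: (a) r·p ≤ γ(p) for all p ∈ G, and (b) Σ_{s∈G, s ≤ v} s·φ(s) + Σ_{i∈I} α_i(p)·(m_i − v^i) + Σ_{j∈J} β_j(p)·(q_j − 1{v ≥ r_j}) − γ(p)·1{v ≥ p} ≥ 0 for all p, v ∈ G. The supremum is attained. -/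

import Mathlib

/-- A finitely generated cone in a finite-dimensional normed space is closed. -/
theorem isClosed_fg_cone {H : Type*} [NormedAddCommGroup H] [NormedSpace ℝ H]
    [FiniteDimensional ℝ H] :
    ∀ (n : ℕ) (g : Fin n → H),
      IsClosed {x : H | ∃ t : Fin n → ℝ, (∀ i, 0 ≤ t i) ∧ ∑ i, t i • g i = x} := by
  intro n
  induction n using Nat.strong_induction_on with
  | _ n IH =>
  intro g
  match n with
  | 0 =>
    have : {x : H | ∃ t : Fin 0 → ℝ, (∀ i, 0 ≤ t i) ∧ ∑ i, t i • g i = x} = {(0:H)} := by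
      ext x; simp [eq_comm]
    rw [this]; exact isClosed_singleton
  | (n+1) =>
    by_cases hli : LinearIndependent ℝ g
    · -- linearly independent: closed embedding of the nonneg orthant
      let L : (Fin (n+1) → ℝ) →ₗ[ℝ] H :=
        { toFun := fun t => ∑ i, t i • g i
          map_add' := by intro a b; simp [add_smul, Finset.sum_add_distrib]
          map_smul' := by intro c a; simp [Finset.smul_sum, smul_smul]
        }
      have hinj : Function.Injective L := by
        intro a b hab
        have h0 : L (a - b) = 0 := by
          rw [map_sub, hab, sub_self]
        have h1 := Fintype.linearIndependent_iff.mp hli (a - b) h0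
        funext i
        have h2 := h1 i
        rw [Pi.sub_apply, sub_eq_zero] at h2
        exact h2
      have hce : Topology.IsClosedEmbedding L := LinearMap.isClosedEmbedding_of_injective
        (LinearMap.ker_eq_bot.mpr hinj)
      have hset : {x : H | ∃ t : Fin (n+1) → ℝ, (∀ i, 0 ≤ t i) ∧ ∑ i, t i • g i = x}
          = L '' {t | ∀ i, 0 ≤ t i} := by
        ext x
        constructor
        · rintro ⟨t, ht, rfl⟩; exact ⟨t, ht, rfl⟩
        · rintro ⟨t, ht, rfl⟩; exact ⟨t, ht, rfl⟩
      rw [hset]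
      refine hce.isClosedMap _ ?_
      have : {t : Fin (n+1) → ℝ | ∀ i, 0 ≤ t i} = ⋂ i, {t | 0 ≤ t i} := by ext; simp
      rw [this]
      exact isClosed_iInter fun i => isClosed_le continuous_const (continuous_apply i)
    · -- dependent: union of cones with one generator removed
      obtain ⟨f, hf0, i₀, hfi₀⟩ : ∃ f : Fin (n+1) → ℝ, ∑ i, f i • g i = 0 ∧ ∃ i, f i ≠ 0 := by
        have := Fintype.linearIndependent_iff.not.mp hli
        push_neg at this
        obtain ⟨f, hf⟩ := this
        exact ⟨f, hf.1, hf.2⟩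
      set μ : Fin (n+1) → ℝ := if 0 < f i₀ then f else -f with hμdef
      have hμ0 : ∑ i, μ i • g i = 0 := by
        by_cases h : 0 < f i₀ <;> simp [hμdef, h, hf0, neg_smul, Finset.sum_neg_distrib]
      have hμpos : 0 < μ i₀ := by
        by_cases h : 0 < f i₀
        · simpa [hμdef, h] using h
        · have : f i₀ < 0 := lt_of_le_of_ne (not_lt.mp h) hfi₀
          simp [hμdef, h]
          linarith
      have key : {x : H | ∃ t : Fin (n+1) → ℝ, (∀ i, 0 ≤ t i) ∧ ∑ i, t i • g i = x}
          = ⋃ j ∈ {j : Fin (n+1) | 0 < μ j},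
              {x : H | ∃ t : Fin n → ℝ, (∀ i, 0 ≤ t i) ∧ ∑ i, t i • g (j.succAbove i) = x} := by
        ext x
        constructor
        · rintro ⟨t, ht0, htx⟩
          -- find minimizer of t k / μ k over positive μ k
          have hPne : (Finset.univ.filter (fun k => 0 < μ k)).Nonempty :=
            ⟨i₀, by simp [hμpos]⟩
          obtain ⟨j, hjmem, hjmin⟩ :=
            Finset.exists_min_image (Finset.univ.filter (fun k => 0 < μ k))
              (fun k => t k / μ k) hPne
          have hμj : 0 < μ j := by simpa using (Finset.mem_filter.mp hjmem).2
          set θ := t j / μ j with hθdef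
          have hθ0 : 0 ≤ θ := div_nonneg (ht0 j) hμj.le
          set t' : Fin (n+1) → ℝ := fun k => t k - θ * μ k with ht'def
          have ht'0 : ∀ k, 0 ≤ t' k := by
            intro k
            by_cases h : 0 < μ k
            · have := hjmin k (by simp [h])
              have : θ * μ k ≤ t k := by
                rw [hθdef]
                calc t j / μ j * μ k ≤ t k / μ k * μ k := by
                      apply mul_le_mul_of_nonneg_right _ h.le
                      exact this
                  _ = t k := div_mul_cancel₀ _ h.ne'
              simp [ht'def]; linarith
            · have : θ * μ k ≤ 0 := mul_nonpos_of_nonneg_of_nonpos hθ0 (not_lt.mp h)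
              have := ht0 k
              simp [ht'def]; linarith
          have ht'j : t' j = 0 := by
            simp [ht'def, hθdef, div_mul_cancel₀ _ hμj.ne']
          have ht'x : ∑ k, t' k • g k = x := by
            have : ∑ k, t' k • g k = ∑ k, t k • g k - θ • ∑ k, μ k • g k := by
              rw [Finset.smul_sum]
              rw [← Finset.sum_sub_distrib]
              congr 1; funext k
              simp [ht'def, sub_smul, smul_smul]
            rw [this, hμ0, smul_zero, sub_zero, htx]
          refine Set.mem_biUnion (show j ∈ {j : Fin (n+1) | 0 < μ j} from hμj) ?_
          refine ⟨fun i => t' (j.succAbove i), fun i => ht'0 _, ?_⟩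
          have := Fin.sum_univ_succAbove (fun k => t' k • g k) j
          rw [ht'j] at this
          simp at this
          rw [← this, ht'x]
        · rintro ⟨_, ⟨j, rfl⟩, hx⟩
          simp only [Set.mem_iUnion, Set.mem_setOf_eq] at hx
          obtain ⟨hj, t, ht0, htx⟩ := hx
          set T : Fin (n+1) → ℝ := j.insertNth 0 t with hTdef
          refine ⟨T, ?_, ?_⟩
          · intro k
            by_cases hk : k = j
            · subst hk; simp [hTdef]
            · obtain ⟨i, rfl⟩ := Fin.exists_succAbove_eq hk
              simpa [hTdef, Fin.insertNth_apply_succAbove] using ht0 i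
          · rw [Fin.sum_univ_succAbove (fun k => T k • g k) j]
            simp [hTdef, Fin.insertNth_apply_succAbove, htx]
      rw [key]
      refine Set.Finite.isClosed_biUnion (Set.toFinite _) ?_
      intro j _
      exact IH n (Nat.lt_succ_self n) (fun i => g (j.succAbove i))

theorem isClosed_fg_cone' {ι : Type*} [Fintype ι] {H : Type*} [NormedAddCommGroup H]
    [NormedSpace ℝ H] [FiniteDimensional ℝ H] (g : ι → H) :
    IsClosed {x : H | ∃ t : ι → ℝ, (∀ i, 0 ≤ t i) ∧ ∑ i, t i • g i = x} := by
  obtain ⟨n, ⟨e⟩⟩ : ∃ n, Nonempty (ι ≃ Fin n) := ⟨Fintype.card ι, ⟨Fintype.equivFin ι⟩⟩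
  have : {x : H | ∃ t : ι → ℝ, (∀ i, 0 ≤ t i) ∧ ∑ i, t i • g i = x}
      = {x : H | ∃ t : Fin n → ℝ, (∀ i, 0 ≤ t i) ∧ ∑ i, t i • g (e.symm i) = x} := by
    ext x
    constructor
    · rintro ⟨t, ht, rfl⟩
      refine ⟨fun i => t (e.symm i), fun i => ht _, ?_⟩
      rw [← Equiv.sum_comp e (fun i => t (e.symm i) • g (e.symm i))]
      simp
    · rintro ⟨t, ht, rfl⟩
      refine ⟨fun i => t (e i), fun i => ht _, ?_⟩
      rw [← Equiv.sum_comp e.symm (fun i => t (e i) • g i)]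
      simp
  rw [this]
  exact isClosed_fg_cone n _

theorem farkas {ι κ : Type*} [Fintype ι] [Fintype κ]
    (A : ι → κ → ℝ) (b : κ → ℝ) (c : ι → ℝ)
    (h : ∀ (f : ι → ℝ) (s : ℝ), (∀ w, 0 ≤ f w) → 0 ≤ s →
      (∀ k, ∑ w, f w * A w k = s * b k) → 0 ≤ ∑ w, f w * c w) :
    ∃ y : κ → ℝ, 0 ≤ ∑ k, b k * y k ∧ ∀ w, ∑ k, A w k * y k ≤ c w := by
  classical
  let H := EuclideanSpace ℝ (κ ⊕ Unit)
  let mk : (κ → ℝ) → ℝ → H := fun u a => (WithLp.equiv 2 _).symm (Sum.elim u fun _ => a)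
  let G : (ι ⊕ Bool) → H :=
    Sum.elim (fun w => mk (A w) (c w))
      (fun s => if s then mk (fun k => -b k) 0 else mk 0 1)
  let C : Set H := {x | ∃ t : (ι ⊕ Bool) → ℝ, (∀ u, 0 ≤ t u) ∧ ∑ u, t u • G u = x}
  have heval : ∀ (F : (ι ⊕ Bool) → H) (k : κ ⊕ Unit), (∑ u, F u) k = ∑ u, F u k := by
    intro F k
    rw [WithLp.ofLp_sum]
    exact Finset.sum_apply k Finset.univ _
  have hsmul : ∀ (a : ℝ) (x : H) (k : κ ⊕ Unit), (a • x) k = a * x k := fun _ _ _ => rfl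
  -- the cone as a ConvexCone
  let cone : ConvexCone ℝ H :=
    { carrier := C
      smul_mem' := by
        rintro a ha x ⟨t, ht, rfl⟩
        refine ⟨fun u => a * t u, fun u => mul_nonneg ha.le (ht u), ?_⟩
        rw [Finset.smul_sum]
        congr 1; funext u; rw [smul_smul]
      add_mem' := by
        rintro x ⟨t, ht, rfl⟩ y ⟨s, hs, rfl⟩
        refine ⟨fun u => t u + s u, fun u => add_nonneg (ht u) (hs u), ?_⟩
        rw [← Finset.sum_add_distrib]
        congr 1; funext u; rw [add_smul] }
  have hCclosed : IsClosed C := isClosed_fg_cone' G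
  have hCne : (C : Set H).Nonempty := by
    refine ⟨0, ⟨fun _ => 0, fun _ => le_refl _, by simp⟩⟩
  have hmem : ∀ u₀, G u₀ ∈ C := by
    intro u₀
    refine ⟨fun u => if u = u₀ then 1 else 0, fun u => by positivity, ?_⟩
    simp [Finset.sum_ite_eq']
  -- the target point
  have hx₀ : mk 0 (-1) ∉ C := by
    rintro ⟨t, ht, hsum⟩
    have h1 : ∀ k : κ, (∑ w, t (Sum.inl w) * A w k) = t (Sum.inr true) * b k := by
      intro k
      have := congrArg (fun x : H => x (Sum.inl k)) hsum
      simp only [heval, hsmul] at this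
      rw [Fintype.sum_sum_type] at this
      simp only [G, Sum.elim_inl, Sum.elim_inr] at this
      have h2 : ∀ w : ι, t (Sum.inl w) * (mk (A w) (c w) (Sum.inl k)) = t (Sum.inl w) * A w k :=
        fun w => rfl
      rw [Finset.sum_congr rfl (fun w _ => h2 w)] at this
      have h3 : ∑ s : Bool, t (Sum.inr s) *
          ((if s then mk (fun k => -b k) 0 else mk 0 1) (Sum.inl k))
          = t (Sum.inr true) * (-b k) := by
        rw [Fintype.sum_bool]
        show t (Sum.inr true) * (-b k) + t (Sum.inr false) * (0:ℝ) = _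
        ring
      rw [h3] at this
      have h4 : mk 0 (-1) (Sum.inl k) = (0:ℝ) := rfl
      rw [h4] at this
      linarith
    have h5 : (∑ w, t (Sum.inl w) * c w) + t (Sum.inr false) = -1 := by
      have := congrArg (fun x : H => x (Sum.inr ())) hsum
      simp only [heval, hsmul] at this
      rw [Fintype.sum_sum_type] at this
      simp only [G, Sum.elim_inl, Sum.elim_inr] at this
      have h2 : ∀ w : ι, t (Sum.inl w) * (mk (A w) (c w) (Sum.inr ())) = t (Sum.inl w) * c w :=
        fun w => rfl
      rw [Finset.sum_congr rfl (fun w _ => h2 w)] at this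
      have h3 : ∑ s : Bool, t (Sum.inr s) *
          ((if s then mk (fun k => -b k) 0 else mk 0 1) (Sum.inr ()))
          = t (Sum.inr false) := by
        rw [Fintype.sum_bool]
        show t (Sum.inr true) * (0:ℝ) + t (Sum.inr false) * (1:ℝ) = _
        ring
      rw [h3] at this
      have h4 : mk 0 (-1) (Sum.inr ()) = (-1:ℝ) := rfl
      rw [h4] at this
      linarith
    have hkey := h (fun w => t (Sum.inl w)) (t (Sum.inr true))
      (fun w => ht _) (ht _) h1
    have := ht (Sum.inr false)
    linarith
  let P : ProperCone ℝ H :=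
    { carrier := C
      add_mem' := fun hx hy => cone.add_mem' hx hy
      zero_mem' := ⟨fun _ => 0, fun _ => le_refl _, by simp⟩
      smul_mem' := by
        rintro c x ⟨t, ht, rfl⟩
        refine ⟨fun u => (c : ℝ) * t u, fun u => mul_nonneg c.2 (ht u), ?_⟩
        rw [Finset.smul_sum]
        congr 1; funext u; show ((c : ℝ) * t u) • G u = (c : ℝ) • t u • G u; rw [smul_smul]
      isClosed' := hCclosed }
  obtain ⟨y, hy1, hy2⟩ :=
    P.hyperplane_separation' (x₀ := mk 0 (-1)) hx₀
  -- inner products in coordinates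
  have hinner : ∀ x z : H, inner ℝ x z = ∑ k, x k * z k := by
    intro x z
    rw [PiLp.inner_apply]
    refine Finset.sum_congr rfl fun k _ => ?_
    simp [RCLike.inner_apply, mul_comm]
  set τ := y (Sum.inr ()) with hτdef
  have hτpos : 0 < τ := by
    have := hy2
    rw [real_inner_comm, hinner] at this
    rw [Fintype.sum_sum_type] at this
    have h4 : ∀ k : κ, y (Sum.inl k) * mk 0 (-1) (Sum.inl k) = 0 := by
      intro k; show y (Sum.inl k) * (0:ℝ) = 0; ring
    rw [Finset.sum_congr rfl (fun k _ => h4 k)] at this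
    simp only [Finset.sum_const_zero, zero_add] at this
    have h5 : ∑ u : Unit, y (Sum.inr u) * mk 0 (-1) (Sum.inr u) = -τ := by
      rw [Fintype.sum_unique]
      show y (Sum.inr ()) * (-1:ℝ) = -τ
      ring
    rw [h5] at this
    linarith
  have hgen : ∀ u₀, 0 ≤ ∑ k, G u₀ k * y k := by
    intro u₀
    have := hy1 _ (hmem u₀)
    rwa [hinner] at this
  have hA : ∀ w, 0 ≤ (∑ k, A w k * y (Sum.inl k)) + c w * τ := by
    intro w
    have := hgen (Sum.inl w)
    rw [Fintype.sum_sum_type] at this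
    have h4 : ∀ k : κ, G (Sum.inl w) (Sum.inl k) * y (Sum.inl k) = A w k * y (Sum.inl k) :=
      fun k => rfl
    rw [Finset.sum_congr rfl (fun k _ => h4 k)] at this
    have h5 : ∑ u : Unit, G (Sum.inl w) (Sum.inr u) * y (Sum.inr u) = c w * τ := by
      rw [Fintype.sum_unique]
      rfl
    rw [h5] at this
    exact this
  have hb : ∑ k, b k * y (Sum.inl k) ≤ 0 := by
    have := hgen (Sum.inr true)
    rw [Fintype.sum_sum_type] at this
    have h4 : ∀ k : κ, G (Sum.inr true) (Sum.inl k) * y (Sum.inl k)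
        = -(b k * y (Sum.inl k)) := by
      intro k; show (-b k) * y (Sum.inl k) = _; ring
    rw [Finset.sum_congr rfl (fun k _ => h4 k)] at this
    have h5 : ∑ u : Unit, G (Sum.inr true) (Sum.inr u) * y (Sum.inr u) = 0 := by
      rw [Fintype.sum_unique]
      show (0:ℝ) * y (Sum.inr ()) = 0; ring
    rw [h5, Finset.sum_neg_distrib, add_zero] at this
    linarith
  refine ⟨fun k => -(y (Sum.inl k)) / τ, ?_, ?_⟩
  · have e1 : ∑ k, b k * (-(y (Sum.inl k)) / τ) = (-∑ k, b k * y (Sum.inl k)) / τ := by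
      calc ∑ k, b k * (-(y (Sum.inl k)) / τ)
          = ∑ k, (b k * y (Sum.inl k)) * (-τ⁻¹) := Finset.sum_congr rfl fun k _ => by ring
        _ = (∑ k, b k * y (Sum.inl k)) * (-τ⁻¹) := by rw [← Finset.sum_mul]
        _ = (-∑ k, b k * y (Sum.inl k)) / τ := by ring
    rw [e1]
    apply div_nonneg _ hτpos.le
    linarith
  · intro w
    have e1 : ∑ k, A w k * (-(y (Sum.inl k)) / τ) = (-∑ k, A w k * y (Sum.inl k)) / τ := by
      calc ∑ k, A w k * (-(y (Sum.inl k)) / τ)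
          = ∑ k, (A w k * y (Sum.inl k)) * (-τ⁻¹) := Finset.sum_congr rfl fun k _ => by ring
        _ = (∑ k, A w k * y (Sum.inl k)) * (-τ⁻¹) := by rw [← Finset.sum_mul]
        _ = (-∑ k, A w k * y (Sum.inl k)) / τ := by ring
    rw [e1, div_le_iff₀ hτpos]
    nlinarith [hA w]




noncomputable section

namespace RobustPricing

/-- A probability weight vector on the grid `{v 0, …, v K}`. -/
def IsDist {K : ℕ} (f : Fin (K + 1) → ℝ) : Prop :=
  (∀ i, 0 ≤ f i) ∧ ∑ i, f i = 1

/-- Tail probability `F̄(p) = ∑_{v ∈ G, v ≥ p} f(v)`. -/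
def tail {K : ℕ} (v f : Fin (K + 1) → ℝ) (p : ℝ) : ℝ :=
  ∑ i, if p ≤ v i then f i else 0

/-- Expected revenue of the price distribution `φ` against the value distribution `f`. -/
def revenue {K : ℕ} (v φ f : Fin (K + 1) → ℝ) : ℝ :=
  ∑ i, φ i * v i * tail v f (v i)

/-- `OPT(F) = max_{p ∈ G} p · F̄(p)`. -/
def opt {K : ℕ} (v f : Fin (K + 1) → ℝ) : ℝ :=
  ⨆ i, v i * tail v f (v i)

/-- `Regret(Φ, F) = OPT(F) − Revenue(Φ, F)`. -/
def regret {K : ℕ} (v φ f : Fin (K + 1) → ℝ) : ℝ :=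
  opt v f - revenue v φ f

/-- `Ratio(Φ, F) = Revenue(Φ, F) / OPT(F)`. -/
def ratio {K : ℕ} (v φ f : Fin (K + 1) → ℝ) : ℝ :=
  revenue v φ f / opt v f

/-- The set of mechanisms (price distributions on the grid). -/
def Mech (K : ℕ) : Set (Fin (K + 1) → ℝ) := {φ | IsDist φ}

/-- Worst-case `λ`-regret `R_λ^Φ(𝓕)` of mechanism `φ` over the uncertainty set `F`. -/
def wcReg {K : ℕ} (v : Fin (K + 1) → ℝ) (F : Set (Fin (K + 1) → ℝ))
    (φ : Fin (K + 1) → ℝ) (l : ℝ) : ℝ :=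
  sSup ((fun f => l * opt v f - revenue v φ f) '' F)

/-- Minimax `λ`-regret `R_λ*(𝓕)`. -/
def minimaxReg {K : ℕ} (v : Fin (K + 1) → ℝ) (F : Set (Fin (K + 1) → ℝ)) (l : ℝ) : ℝ :=
  sInf ((fun φ => wcReg v F φ l) '' Mech K)

/-- Worst-case revenue `min_{F ∈ 𝓕} Revenue(Φ, F)`. -/
def worstRevenue {K : ℕ} (v : Fin (K + 1) → ℝ) (F : Set (Fin (K + 1) → ℝ))
    (φ : Fin (K + 1) → ℝ) : ℝ :=
  sInf ((fun f => revenue v φ f) '' F)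

/-- Worst-case regret `max_{F ∈ 𝓕} Regret(Φ, F)`. -/
def worstRegret {K : ℕ} (v : Fin (K + 1) → ℝ) (F : Set (Fin (K + 1) → ℝ))
    (φ : Fin (K + 1) → ℝ) : ℝ :=
  sSup ((fun f => regret v φ f) '' F)

/-- Worst-case ratio `min_{F ∈ 𝓕} Ratio(Φ, F)`. -/
def worstRatio {K : ℕ} (v : Fin (K + 1) → ℝ) (F : Set (Fin (K + 1) → ℝ))
    (φ : Fin (K + 1) → ℝ) : ℝ :=
  sInf ((fun f => ratio v φ f) '' F)

/-- Maximin revenue `θ*_Revenue(𝓕) = max_Φ min_{F ∈ 𝓕} Revenue(Φ, F)`. -/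
def thetaRevStar {K : ℕ} (v : Fin (K + 1) → ℝ) (F : Set (Fin (K + 1) → ℝ)) : ℝ :=
  sSup ((fun φ => worstRevenue v F φ) '' Mech K)

/-- Minimax regret `θ*_Regret(𝓕) = min_Φ max_{F ∈ 𝓕} Regret(Φ, F)`. -/
def thetaRegStar {K : ℕ} (v : Fin (K + 1) → ℝ) (F : Set (Fin (K + 1) → ℝ)) : ℝ :=
  sInf ((fun φ => worstRegret v F φ) '' Mech K)

/-- Maximin ratio `θ*_Ratio(𝓕) = max_Φ min_{F ∈ 𝓕} Ratio(Φ, F)`. -/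
def thetaRatStar {K : ℕ} (v : Fin (K + 1) → ℝ) (F : Set (Fin (K + 1) → ℝ)) : ℝ :=
  sSup ((fun φ => worstRatio v F φ) '' Mech K)

/-- Relative performance of `Φ` over all three criteria:
`RelPerf(Φ, All, 𝓕) = min_{F ∈ 𝓕} min{Rev/θ*_Rev, θ*_Reg/Reg, Ratio/θ*_Ratio}`. -/
def relPerfAll {K : ℕ} (v : Fin (K + 1) → ℝ) (F : Set (Fin (K + 1) → ℝ))
    (φ : Fin (K + 1) → ℝ) : ℝ :=
  sInf ((fun f => min (revenue v φ f / thetaRevStar v F)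
    (min (thetaRegStar v F / regret v φ f) (ratio v φ f / thetaRatStar v F))) '' F)

/-- Multi-criterion robust approximation factor `c*(𝓕) = max_Φ RelPerf(Φ, All, 𝓕)`. -/
def cstar {K : ℕ} (v : Fin (K + 1) → ℝ) (F : Set (Fin (K + 1) → ℝ)) : ℝ :=
  sSup ((fun φ => relPerfAll v F φ) '' Mech K)

/-- The moment–quantile uncertainty set: distributions on the grid whose `i`-th moments
are `m i` for `i ∈ I` and whose tail probability at `r j` is `q j` for `j ∈ J`. -/
def MQSet {K : ℕ} (v : Fin (K + 1) → ℝ) (I : Finset ℕ) (m : ℕ → ℝ)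
    (J : Finset ℕ) (r q : ℕ → ℝ) : Set (Fin (K + 1) → ℝ) :=
  {f | IsDist f ∧ (∀ i ∈ I, ∑ k, f k * v k ^ i = m i) ∧ (∀ j ∈ J, tail v f (r j) = q j)}

/-- Cumulative term `∑_{s ∈ G, s ≤ v_w} s · φ(s)`. -/
def cum {K : ℕ} (v φ : Fin (K + 1) → ℝ) (w : Fin (K + 1)) : ℝ :=
  ∑ s, if v s ≤ v w then v s * φ s else 0

/-- Feasibility of dual variables `(θ, α, β)` in the dual LP for the worst-case λ-regret:
(a) `θ ≥ ∑_i α_i(p) m_i + ∑_j β_j(p) q_j` for all prices `p ∈ G`, and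
(b) `λ p 1{v ≥ p} − ∑_{s ≤ v} s φ(s) − ∑_i α_i(p) v^i − ∑_j β_j(p) 1{v ≥ r_j} ≤ 0`
for all values `v` and prices `p` in `G`. -/
def dualFeas {K : ℕ} (v : Fin (K + 1) → ℝ) (I : Finset ℕ) (m : ℕ → ℝ)
    (J : Finset ℕ) (r q : ℕ → ℝ) (φ : Fin (K + 1) → ℝ) (l θ : ℝ)
    (α β : ℕ → Fin (K + 1) → ℝ) : Prop :=
  (∀ p, ∑ i ∈ I, α i p * m i + ∑ j ∈ J, β j p * q j ≤ θ) ∧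
  (∀ w p, l * v p * (if v p ≤ v w then 1 else 0) - cum v φ w
      - (∑ i ∈ I, α i p * v w ^ i)
      - (∑ j ∈ J, β j p * (if r j ≤ v w then 1 else 0)) ≤ 0)

section DualityLemmas

variable {K : ℕ}

lemma tail_nonneg (v f : Fin (K + 1) → ℝ) (hf : ∀ i, 0 ≤ f i) (p : ℝ) : 0 ≤ tail v f p := by
  unfold tail
  refine Finset.sum_nonneg fun i _ => ?_
  split
  · exact hf i
  · exact le_refl 0

lemma cum_nonneg (v φ : Fin (K + 1) → ℝ) (hv0 : ∀ i, 0 ≤ v i) (hφ : ∀ i, 0 ≤ φ i)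
    (w : Fin (K + 1)) : 0 ≤ cum v φ w := by
  unfold cum
  refine Finset.sum_nonneg fun i _ => ?_
  split
  · exact mul_nonneg (hv0 i) (hφ i)
  · exact le_refl 0

lemma vtail_le_opt (v f : Fin (K + 1) → ℝ) (p : Fin (K + 1)) :
    v p * tail v f (v p) ≤ opt v f := by
  unfold opt
  exact le_ciSup (Set.Finite.bddAbove (Set.finite_range fun i => v i * tail v f (v i))) p

lemma opt_nonneg (v f : Fin (K + 1) → ℝ) (hv0 : ∀ i, 0 ≤ v i) (hf : ∀ i, 0 ≤ f i) :
    0 ≤ opt v f :=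
  le_trans (mul_nonneg (hv0 0) (tail_nonneg v f hf (v 0))) (vtail_le_opt v f 0)

lemma revenue_nonneg (v φ f : Fin (K + 1) → ℝ) (hv0 : ∀ i, 0 ≤ v i) (hφ : ∀ i, 0 ≤ φ i)
    (hf : ∀ i, 0 ≤ f i) : 0 ≤ revenue v φ f :=
  Finset.sum_nonneg fun i _ =>
    mul_nonneg (mul_nonneg (hφ i) (hv0 i)) (tail_nonneg v f hf (v i))

lemma revenue_le_opt (v φ f : Fin (K + 1) → ℝ) (hφ : IsDist φ)
    (hf : ∀ i, 0 ≤ f i) : revenue v φ f ≤ opt v f := by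
  have h1 : revenue v φ f ≤ ∑ i, φ i * opt v f := by
    unfold revenue
    refine Finset.sum_le_sum fun i _ => ?_
    rw [mul_assoc]
    exact mul_le_mul_of_nonneg_left (vtail_le_opt v f i) (hφ.1 i)
  have h2 : ∑ i, φ i * opt v f = opt v f := by
    rw [← Finset.sum_mul, hφ.2, one_mul]
  linarith

lemma revenue_eq_sum_cum (v φ f : Fin (K + 1) → ℝ) :
    revenue v φ f = ∑ w, f w * cum v φ w := by
  unfold revenue tail cum
  calc ∑ i, φ i * v i * ∑ w, (if v i ≤ v w then f w else 0)
      = ∑ i, ∑ w, (if v i ≤ v w then φ i * v i * f w else 0) := by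
        refine Finset.sum_congr rfl fun i _ => ?_
        rw [Finset.mul_sum]
        refine Finset.sum_congr rfl fun w _ => ?_
        split <;> simp
    _ = ∑ w, ∑ i, (if v i ≤ v w then φ i * v i * f w else 0) := Finset.sum_comm
    _ = ∑ w, f w * ∑ i, (if v i ≤ v w then v i * φ i else 0) := by
        refine Finset.sum_congr rfl fun w _ => ?_
        rw [Finset.mul_sum]
        refine Finset.sum_congr rfl fun i _ => ?_
        split
        · ring
        · ring

lemma ratio_eq (v φ f : Fin (K + 1) → ℝ) :
    ratio v φ f = ∑ i, φ i * (v i * tail v f (v i) / opt v f) := by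
  unfold ratio revenue
  calc (∑ i, φ i * v i * tail v f (v i)) / opt v f
      = (∑ i, φ i * v i * tail v f (v i)) * (opt v f)⁻¹ := div_eq_mul_inv _ _
    _ = ∑ i, (φ i * v i * tail v f (v i)) * (opt v f)⁻¹ := Finset.sum_mul ..
    _ = ∑ i, φ i * (v i * tail v f (v i) / opt v f) := by
        refine Finset.sum_congr rfl fun i _ => ?_
        rw [div_eq_mul_inv]; ring

lemma coef_nonneg (v f : Fin (K + 1) → ℝ) (hv0 : ∀ i, 0 ≤ v i) (hf : ∀ i, 0 ≤ f i)
    (hop : 0 ≤ opt v f) (i : Fin (K + 1)) : 0 ≤ v i * tail v f (v i) / opt v f :=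
  div_nonneg (mul_nonneg (hv0 i) (tail_nonneg v f hf (v i))) hop

lemma coef_le_one (v f : Fin (K + 1) → ℝ) (hop : 0 < opt v f) (i : Fin (K + 1)) :
    v i * tail v f (v i) / opt v f ≤ 1 :=
  (div_le_one hop).mpr (vtail_le_opt v f i)

lemma abs_ratio_le (v φ f : Fin (K + 1) → ℝ) (hv0 : ∀ i, 0 ≤ v i) (hf : ∀ i, 0 ≤ f i)
    (hop : 0 < opt v f) : |ratio v φ f| ≤ ∑ i, |φ i| := by
  rw [ratio_eq]
  calc |∑ i, φ i * (v i * tail v f (v i) / opt v f)|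
      ≤ ∑ i, |φ i * (v i * tail v f (v i) / opt v f)| := Finset.abs_sum_le_sum_abs _ _
    _ ≤ ∑ i, |φ i| := by
        refine Finset.sum_le_sum fun i _ => ?_
        rw [abs_mul]
        have h1 : |v i * tail v f (v i) / opt v f| ≤ 1 := by
          rw [abs_of_nonneg (coef_nonneg v f hv0 hf hop.le i)]
          exact coef_le_one v f hop i
        calc |φ i| * |v i * tail v f (v i) / opt v f| ≤ |φ i| * 1 :=
              mul_le_mul_of_nonneg_left h1 (abs_nonneg _)
          _ = |φ i| := mul_one _

lemma ratio_nonneg (v φ f : Fin (K + 1) → ℝ) (hv0 : ∀ i, 0 ≤ v i) (hφ : ∀ i, 0 ≤ φ i)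
    (hf : ∀ i, 0 ≤ f i) : 0 ≤ ratio v φ f :=
  div_nonneg (revenue_nonneg v φ f hv0 hφ hf) (opt_nonneg v f hv0 hf)

lemma ratio_le_one (v φ f : Fin (K + 1) → ℝ) (hφ : IsDist φ) (hf : ∀ i, 0 ≤ f i)
    (hop : 0 < opt v f) : ratio v φ f ≤ 1 :=
  (div_le_one hop).mpr (revenue_le_opt v φ f hφ hf)

lemma ratio_sub_le (v φ ψ f : Fin (K + 1) → ℝ) (hv0 : ∀ i, 0 ≤ v i) (hf : ∀ i, 0 ≤ f i)
    (hop : 0 < opt v f) : ratio v φ f ≤ ratio v ψ f + ∑ i, |φ i - ψ i| := by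
  rw [ratio_eq v φ f, ratio_eq v ψ f]
  have key : ∑ i, φ i * (v i * tail v f (v i) / opt v f)
      - ∑ i, ψ i * (v i * tail v f (v i) / opt v f)
      = ∑ i, (φ i - ψ i) * (v i * tail v f (v i) / opt v f) := by
    rw [← Finset.sum_sub_distrib]
    refine Finset.sum_congr rfl fun i _ => ?_
    ring
  have bd : ∑ i, (φ i - ψ i) * (v i * tail v f (v i) / opt v f) ≤ ∑ i, |φ i - ψ i| := by
    refine Finset.sum_le_sum fun i _ => ?_
    calc (φ i - ψ i) * (v i * tail v f (v i) / opt v f)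
        ≤ |φ i - ψ i| * (v i * tail v f (v i) / opt v f) :=
          mul_le_mul_of_nonneg_right (le_abs_self _) (coef_nonneg v f hv0 hf hop.le i)
      _ ≤ |φ i - ψ i| * 1 := mul_le_mul_of_nonneg_left (coef_le_one v f hop i) (abs_nonneg _)
      _ = |φ i - ψ i| := mul_one _
  linarith

lemma swap_sum (f : Fin (K + 1) → ℝ) (X : Finset ℕ) (a : ℕ → ℝ) (h : ℕ → Fin (K + 1) → ℝ) :
    ∑ w, f w * ∑ i ∈ X, a i * h i w = ∑ i ∈ X, a i * ∑ w, f w * h i w := by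
  calc ∑ w, f w * ∑ i ∈ X, a i * h i w
      = ∑ w, ∑ i ∈ X, a i * (f w * h i w) := by
        refine Finset.sum_congr rfl fun w _ => ?_
        rw [Finset.mul_sum]
        exact Finset.sum_congr rfl fun i _ => by ring
    _ = ∑ i ∈ X, ∑ w, a i * (f w * h i w) := Finset.sum_comm
    _ = ∑ i ∈ X, a i * ∑ w, f w * h i w := by
        refine Finset.sum_congr rfl fun i _ => ?_
        rw [Finset.mul_sum]

lemma sum_mul_ite (v f : Fin (K + 1) → ℝ) (p : ℝ) :
    ∑ w, f w * (if p ≤ v w then (1:ℝ) else 0) = tail v f p := by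
  unfold tail
  refine Finset.sum_congr rfl fun w _ => ?_
  split <;> simp

section MQ

variable (v : Fin (K + 1) → ℝ) (F : Set (Fin (K + 1) → ℝ))
variable (hv0 : ∀ i, 0 ≤ v i) (hFd : ∀ f ∈ F, IsDist f) (hopt' : ∀ f ∈ F, 0 < opt v f)
variable (hFne : F.Nonempty)

include hv0 hFd hopt'

lemma worstRatio_le_ratio (φ : Fin (K + 1) → ℝ) {f : Fin (K + 1) → ℝ} (hf : f ∈ F) :
    worstRatio v F φ ≤ ratio v φ f := by
  refine csInf_le ⟨-∑ i, |φ i|, ?_⟩ ⟨f, hf, rfl⟩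
  rintro x ⟨g, hg, rfl⟩
  exact (abs_le.mp (abs_ratio_le v φ g hv0 (hFd g hg).1 (hopt' g hg))).1

omit hopt' in
include hFne in
lemma worstRatio_nonneg (φ : Fin (K + 1) → ℝ) (hφ : ∀ i, 0 ≤ φ i) :
    0 ≤ worstRatio v F φ := by
  refine le_csInf (hFne.image _) ?_
  rintro x ⟨g, hg, rfl⟩
  exact ratio_nonneg v φ g hv0 hφ (hFd g hg).1

include hFne in
lemma worstRatio_le_one (φ : Fin (K + 1) → ℝ) (hφ : IsDist φ) :
    worstRatio v F φ ≤ 1 := by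
  obtain ⟨f₀, hf₀⟩ := hFne
  exact le_trans (worstRatio_le_ratio v F hv0 hFd hopt' φ hf₀)
    (ratio_le_one v φ f₀ hφ (hFd f₀ hf₀).1 (hopt' f₀ hf₀))

include hFne in
lemma worstRatio_lip (φ ψ : Fin (K + 1) → ℝ) :
    worstRatio v F φ ≤ worstRatio v F ψ + ∑ i, |φ i - ψ i| := by
  have h1 : ∀ f ∈ F, worstRatio v F φ - ∑ i, |φ i - ψ i| ≤ ratio v ψ f := by
    intro f hf
    have h2 := worstRatio_le_ratio v F hv0 hFd hopt' φ hf
    have h3 := ratio_sub_le v φ ψ f hv0 (hFd f hf).1 (hopt' f hf)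
    linarith
  have h4 : worstRatio v F φ - ∑ i, |φ i - ψ i| ≤ worstRatio v F ψ := by
    refine le_csInf (hFne.image _) ?_
    rintro x ⟨g, hg, rfl⟩
    exact h1 g hg
  linarith

include hFne in
lemma worstRatio_continuous : Continuous (worstRatio v F) := by
  have hlip : LipschitzWith ((K : NNReal) + 1) (worstRatio v F) := by
    apply LipschitzWith.of_dist_le_mul
    intro φ ψ
    have hC : ((((K : NNReal) + 1) : NNReal) : ℝ) = (K : ℝ) + 1 := by push_cast; ring
    rw [hC]
    have hsum : ∑ i, |φ i - ψ i| ≤ (K + 1 : ℝ) * dist φ ψ := by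
      calc ∑ i, |φ i - ψ i| = ∑ i, dist (φ i) (ψ i) := by
            refine Finset.sum_congr rfl fun i _ => ?_
            rw [Real.dist_eq]
        _ ≤ ∑ _i : Fin (K + 1), dist φ ψ :=
            Finset.sum_le_sum fun i _ => dist_le_pi_dist φ ψ i
        _ = (K + 1 : ℝ) * dist φ ψ := by
            rw [Finset.sum_const, Finset.card_univ, Fintype.card_fin, nsmul_eq_mul]
            push_cast
            ring
    have l1 := worstRatio_lip v F hv0 hFd hopt' hFne φ ψ
    have l2 := worstRatio_lip v F hv0 hFd hopt' hFne ψ φ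
    have hsum' : ∑ i, |ψ i - φ i| ≤ (K + 1 : ℝ) * dist φ ψ := by
      have : ∑ i, |ψ i - φ i| = ∑ i, |φ i - ψ i| := by
        refine Finset.sum_congr rfl fun i _ => ?_
        rw [abs_sub_comm]
      rw [this]; exact hsum
    rw [Real.dist_eq, abs_sub_le_iff]
    constructor <;> linarith
  exact hlip.continuous

include hFne in
lemma exists_opt_mech :
    ∃ φ ∈ Mech K, (∀ ψ ∈ Mech K, worstRatio v F ψ ≤ worstRatio v F φ)
      ∧ thetaRatStar v F = worstRatio v F φ := by
  have hMechEq : Mech K = stdSimplex ℝ (Fin (K + 1)) := rfl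
  have hcompact : IsCompact (Mech K) := by rw [hMechEq]; exact isCompact_stdSimplex _ _
  have hMne : (Mech K).Nonempty := by
    obtain ⟨f₀, hf₀⟩ := hFne
    exact ⟨f₀, hFd f₀ hf₀⟩
  obtain ⟨φ, hφmem, hφmax⟩ := hcompact.exists_isMaxOn hMne
    (worstRatio_continuous v F hv0 hFd hopt' hFne).continuousOn
  refine ⟨φ, hφmem, fun ψ hψ => isMaxOn_iff.mp hφmax ψ hψ, ?_⟩
  refine IsGreatest.csSup_eq ⟨⟨φ, hφmem, rfl⟩, ?_⟩
  rintro x ⟨ψ, hψ, rfl⟩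
  exact isMaxOn_iff.mp hφmax ψ hψ

end MQ

/-- Weak duality: any feasible `ρ` is a lower bound on every ratio. -/
lemma ratio_ge_of_feasible (v : Fin (K + 1) → ℝ) (hv0 : ∀ i, 0 ≤ v i)
    (I : Finset ℕ) (m : ℕ → ℝ) (J : Finset ℕ) (r q : ℕ → ℝ)
    {f : Fin (K + 1) → ℝ} (hf : f ∈ MQSet v I m J r q) (hop : 0 < opt v f)
    (ρ : ℝ) (φ : Fin (K + 1) → ℝ) (α β : ℕ → Fin (K + 1) → ℝ) (γ : Fin (K + 1) → ℝ)
    (hφ : IsDist φ) (ha : ∀ p, ρ * v p ≤ γ p)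
    (hb : ∀ p w, 0 ≤ cum v φ w + (∑ i ∈ I, α i p * (m i - v w ^ i))
        + (∑ j ∈ J, β j p * (q j - if r j ≤ v w then 1 else 0))
        - γ p * (if v p ≤ v w then 1 else 0)) :
    ρ ≤ ratio v φ f := by
  obtain ⟨hfd, hmom, htl⟩ := hf
  have key : ∀ p, γ p * tail v f (v p) ≤ revenue v φ f := by
    intro p
    have hS : 0 ≤ ∑ w, f w * (cum v φ w + (∑ i ∈ I, α i p * (m i - v w ^ i))
        + (∑ j ∈ J, β j p * (q j - if r j ≤ v w then 1 else 0))
        - γ p * (if v p ≤ v w then 1 else 0)) :=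
      Finset.sum_nonneg fun w _ => mul_nonneg (hfd.1 w) (hb p w)
    have expand : ∑ w, f w * (cum v φ w + (∑ i ∈ I, α i p * (m i - v w ^ i))
        + (∑ j ∈ J, β j p * (q j - if r j ≤ v w then 1 else 0))
        - γ p * (if v p ≤ v w then 1 else 0))
        = (∑ w, f w * cum v φ w)
          + (∑ w, f w * ∑ i ∈ I, α i p * (m i - v w ^ i))
          + (∑ w, f w * ∑ j ∈ J, β j p * (q j - if r j ≤ v w then 1 else 0))
          - (∑ w, f w * (γ p * (if v p ≤ v w then 1 else 0))) := by
      rw [← Finset.sum_add_distrib, ← Finset.sum_add_distrib, ← Finset.sum_sub_distrib]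
      refine Finset.sum_congr rfl fun w _ => ?_
      ring
    have e1 : ∑ w, f w * cum v φ w = revenue v φ f := (revenue_eq_sum_cum v φ f).symm
    have e2 : ∑ w, f w * ∑ i ∈ I, α i p * (m i - v w ^ i) = 0 := by
      rw [swap_sum f I (fun i => α i p) (fun i w => m i - v w ^ i)]
      refine Finset.sum_eq_zero fun i hi => ?_
      have hz : ∑ w, f w * (m i - v w ^ i) = 0 := by
        have : ∑ w, f w * (m i - v w ^ i) = (∑ w, f w) * m i - ∑ w, f w * v w ^ i := by
          rw [Finset.sum_mul, ← Finset.sum_sub_distrib]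
          refine Finset.sum_congr rfl fun w _ => ?_
          ring
        rw [this, hfd.2, one_mul, hmom i hi, sub_self]
      rw [hz, mul_zero]
    have e3 : ∑ w, f w * ∑ j ∈ J, β j p * (q j - if r j ≤ v w then 1 else 0) = 0 := by
      rw [swap_sum f J (fun j => β j p) (fun j w => q j - if r j ≤ v w then 1 else 0)]
      refine Finset.sum_eq_zero fun j hj => ?_
      have hz : ∑ w, f w * (q j - if r j ≤ v w then 1 else 0) = 0 := by
        have : ∑ w, f w * (q j - if r j ≤ v w then 1 else 0)
            = (∑ w, f w) * q j - ∑ w, f w * (if r j ≤ v w then 1 else 0) := by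
          rw [Finset.sum_mul, ← Finset.sum_sub_distrib]
          refine Finset.sum_congr rfl fun w _ => ?_
          ring
        rw [this, hfd.2, one_mul, sum_mul_ite, htl j hj, sub_self]
      rw [hz, mul_zero]
    have e4 : ∑ w, f w * (γ p * (if v p ≤ v w then 1 else 0))
        = γ p * tail v f (v p) := by
      have : ∑ w, f w * (γ p * (if v p ≤ v w then 1 else 0))
          = γ p * ∑ w, f w * (if v p ≤ v w then 1 else 0) := by
        rw [Finset.mul_sum]
        refine Finset.sum_congr rfl fun w _ => ?_
        ring
      rw [this, sum_mul_ite]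
    rw [expand, e1, e2, e3, e4] at hS
    linarith
  have key2 : ∀ p, ρ * (v p * tail v f (v p)) ≤ revenue v φ f := by
    intro p
    have h1 : ρ * v p * tail v f (v p) ≤ γ p * tail v f (v p) :=
      mul_le_mul_of_nonneg_right (ha p) (tail_nonneg v f hfd.1 (v p))
    calc ρ * (v p * tail v f (v p)) = ρ * v p * tail v f (v p) := by ring
      _ ≤ γ p * tail v f (v p) := h1
      _ ≤ revenue v φ f := key p
  rcases le_or_gt ρ 0 with hρ | hρ
  · exact le_trans hρ (ratio_nonneg v φ f hv0 hφ.1 hfd.1)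
  · have hopt_le : opt v f ≤ revenue v φ f / ρ := by
      unfold opt
      refine ciSup_le fun p => ?_
      rw [le_div_iff₀ hρ]
      have := key2 p
      nlinarith [key2 p]
    unfold ratio
    rw [le_div_iff₀ hop]
    have := (le_div_iff₀ hρ).mp hopt_le
    nlinarith [this]

end DualityLemmas

/-- the maximin ratio over a moment–quantile uncertainty set equals the
(attained) supremum of `r` over feasible tuples `(r, φ, α, β, γ)` of the ratio LP. -/
theorem stmt13 (K : ℕ) (v : Fin (K + 1) → ℝ) (hv : StrictMono v) (hv0 : ∀ i, 0 ≤ v i)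
    (I : Finset ℕ) (m : ℕ → ℝ) (J : Finset ℕ) (r q : ℕ → ℝ)
    (hI0 : 0 ∈ I) (hm0 : m 0 = 1) (hrG : ∀ j ∈ J, ∃ i, r j = v i)
    (hMQ : (MQSet v I m J r q).Nonempty)
    (hopt : ∀ f ∈ MQSet v I m J r q, 0 < opt v f) :
    IsGreatest {ρ : ℝ | ∃ (φ : Fin (K + 1) → ℝ) (α β : ℕ → Fin (K + 1) → ℝ)
        (γ : Fin (K + 1) → ℝ), IsDist φ ∧
        (∀ p, ρ * v p ≤ γ p) ∧
        (∀ p w, 0 ≤ cum v φ w + (∑ i ∈ I, α i p * (m i - v w ^ i))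
            + (∑ j ∈ J, β j p * (q j - if r j ≤ v w then 1 else 0))
            - γ p * (if v p ≤ v w then 1 else 0))}
      (thetaRatStar v (MQSet v I m J r q)) := by
  classical
  set F := MQSet v I m J r q with hFdef
  have hFd : ∀ f ∈ F, IsDist f := fun f hf => hf.1
  obtain ⟨φs, hφsMech, hφsMax, hθeq⟩ := exists_opt_mech v F hv0 hFd hopt hMQ
  have hφsDist : IsDist φs := hφsMech
  set ρ := worstRatio v F φs with hρdef
  have hρ0 : 0 ≤ ρ := worstRatio_nonneg v F hv0 hFd hMQ φs hφsDist.1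
  constructor
  · -- membership: the maximin value is attained by a feasible tuple
    rw [hθeq]
    have hex : ∀ p : Fin (K + 1), ∃ y : ({i // i ∈ I} ⊕ {j // j ∈ J}) → ℝ,
        (0 ≤ ∑ i ∈ I.attach, m i * y (Sum.inl i) + ∑ j ∈ J.attach, q j * y (Sum.inr j)) ∧
        ∀ w, ∑ i ∈ I.attach, v w ^ (i : ℕ) * y (Sum.inl i)
            + ∑ j ∈ J.attach, (if r j ≤ v w then (1:ℝ) else 0) * y (Sum.inr j)
          ≤ cum v φs w - (ρ * v p) * (if v p ≤ v w then 1 else 0) := by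
      intro p
      obtain ⟨y, hy1, hy2⟩ := farkas
        (fun w => Sum.elim (fun i : {i // i ∈ I} => v w ^ (i : ℕ))
          (fun j : {j // j ∈ J} => if r j ≤ v w then (1:ℝ) else 0))
        (Sum.elim (fun i : {i // i ∈ I} => m i) (fun j : {j // j ∈ J} => q j))
        (fun w => cum v φs w - (ρ * v p) * (if v p ≤ v w then 1 else 0))
        (by
          intro f s hf hs hconstr
          have h00 : ∑ w, f w = s := by
            have h0 := hconstr (Sum.inl ⟨0, hI0⟩)
            simp only [Sum.elim_inl, pow_zero, mul_one, hm0] at h0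
            exact h0
          rcases eq_or_lt_of_le hs with hs0 | hs0
          · refine le_of_eq (Finset.sum_eq_zero fun w hw => ?_).symm
            have hall : f w = 0 := by
              rw [← hs0] at h00
              exact (Finset.sum_eq_zero_iff_of_nonneg (fun w _ => hf w)).mp h00 w hw
            rw [hall, zero_mul]
          · set g : Fin (K + 1) → ℝ := fun w => f w / s with hgdef
            have hsne : s ≠ 0 := ne_of_gt hs0
            have hfg : ∀ w, f w = s * g w := by
              intro w
              show f w = s * (f w / s)
              field_simp
            have hg0 : ∀ w, 0 ≤ g w := fun w => div_nonneg (hf w) hs0.le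
            have hgsum : ∑ w, g w = 1 := by
              have e : ∑ w, g w = (∑ w, f w) * s⁻¹ := by
                rw [Finset.sum_mul]
                refine Finset.sum_congr rfl fun w _ => ?_
                show f w / s = f w * s⁻¹
                rw [div_eq_mul_inv]
              rw [e, h00, mul_inv_cancel₀ hsne]
            have hgmom : ∀ i ∈ I, ∑ w, g w * v w ^ i = m i := by
              intro i hi
              have hci := hconstr (Sum.inl ⟨i, hi⟩)
              simp only [Sum.elim_inl] at hci
              calc ∑ w, g w * v w ^ i = ∑ w, (f w * v w ^ i) * s⁻¹ := by
                    refine Finset.sum_congr rfl fun w _ => ?_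
                    show f w / s * v w ^ i = f w * v w ^ i * s⁻¹
                    rw [div_eq_mul_inv]
                    ring
                _ = (∑ w, f w * v w ^ i) * s⁻¹ := (Finset.sum_mul ..).symm
                _ = (s * m i) * s⁻¹ := by rw [hci]
                _ = m i := by field_simp
            have hgtail : ∀ j ∈ J, tail v g (r j) = q j := by
              intro j hj
              have hcj := hconstr (Sum.inr ⟨j, hj⟩)
              simp only [Sum.elim_inr] at hcj
              have ht : tail v g (r j)
                  = (∑ w, f w * (if r j ≤ v w then (1:ℝ) else 0)) * s⁻¹ := by
                calc tail v g (r j) = ∑ w, g w * (if r j ≤ v w then (1:ℝ) else 0) :=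
                      (sum_mul_ite v g (r j)).symm
                  _ = ∑ w, (f w * (if r j ≤ v w then (1:ℝ) else 0)) * s⁻¹ := by
                      refine Finset.sum_congr rfl fun w _ => ?_
                      show f w / s * _ = (f w * _) * s⁻¹
                      rw [div_eq_mul_inv]
                      ring
                  _ = (∑ w, f w * (if r j ≤ v w then (1:ℝ) else 0)) * s⁻¹ :=
                      (Finset.sum_mul ..).symm
              rw [ht, hcj]
              field_simp
            have hgF : g ∈ F := ⟨⟨hg0, hgsum⟩, hgmom, hgtail⟩
            have hρg : ρ ≤ ratio v φs g :=
              worstRatio_le_ratio v F hv0 hFd hopt φs hgF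
            have hrev : ρ * opt v g ≤ revenue v φs g := by
              unfold ratio at hρg
              exact (le_div_iff₀ (hopt g hgF)).mp hρg
            have hvt : v p * tail v g (v p) ≤ opt v g := vtail_le_opt v g p
            have htail0 : 0 ≤ tail v g (v p) := tail_nonneg v g hg0 (v p)
            have hsplit : ∑ w, f w * (cum v φs w - (ρ * v p) * (if v p ≤ v w then 1 else 0))
                = s * (revenue v φs g - (ρ * v p) * tail v g (v p)) := by
              have e1 : ∑ w, f w * (cum v φs w - (ρ * v p) * (if v p ≤ v w then 1 else 0))
                  = s * ∑ w, g w * (cum v φs w - (ρ * v p) * (if v p ≤ v w then 1 else 0)) := by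
                rw [Finset.mul_sum]
                refine Finset.sum_congr rfl fun w _ => ?_
                rw [hfg w]
                ring
              rw [e1]
              have e2 : ∑ w, g w * (cum v φs w - (ρ * v p) * (if v p ≤ v w then 1 else 0))
                  = revenue v φs g - (ρ * v p) * tail v g (v p) := by
                have e3 : ∑ w, g w * (cum v φs w - (ρ * v p) * (if v p ≤ v w then 1 else 0))
                    = ∑ w, g w * cum v φs w
                      - ∑ w, (ρ * v p) * (g w * (if v p ≤ v w then 1 else 0)) := by
                  rw [← Finset.sum_sub_distrib]
                  refine Finset.sum_congr rfl fun w _ => ?_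
                  ring
                rw [e3, ← revenue_eq_sum_cum, ← Finset.mul_sum, sum_mul_ite]
              rw [e2]
            rw [hsplit]
            have hfinal : 0 ≤ revenue v φs g - (ρ * v p) * tail v g (v p) := by
              have h5 : ρ * (v p * tail v g (v p)) ≤ ρ * opt v g :=
                mul_le_mul_of_nonneg_left hvt hρ0
              nlinarith [hrev, h5]
            exact mul_nonneg hs0.le hfinal)
      refine ⟨y, ?_, ?_⟩
      · rw [Fintype.sum_sum_type] at hy1
        simp only [Sum.elim_inl, Sum.elim_inr, Finset.univ_eq_attach] at hy1
        exact hy1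
      · intro w
        have hw := hy2 w
        rw [Fintype.sum_sum_type] at hw
        simp only [Sum.elim_inl, Sum.elim_inr, Finset.univ_eq_attach] at hw
        exact hw
    choose Y hY1 hY2 using hex
    refine ⟨φs, (fun i p => if h : i ∈ I then Y p (Sum.inl ⟨i, h⟩) else 0),
      (fun j p => if h : j ∈ J then Y p (Sum.inr ⟨j, h⟩) else 0),
      (fun p => ρ * v p), hφsDist, fun p => le_refl (ρ * v p), ?_⟩
    intro p w
    dsimp only
    have hA := hY2 p w
    have hB := hY1 p
    have cI : ∑ i ∈ I, (if h : i ∈ I then Y p (Sum.inl ⟨i, h⟩) else 0) * (m i - v w ^ i)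
        = ∑ i ∈ I.attach, Y p (Sum.inl i) * (m i - v w ^ (i : ℕ)) := by
      rw [← Finset.sum_attach I
        (fun i => (if h : i ∈ I then Y p (Sum.inl ⟨i, h⟩) else 0) * (m i - v w ^ i))]
      refine Finset.sum_congr rfl fun i _ => ?_
      rw [dif_pos i.2]
    have cJ : ∑ j ∈ J, (if h : j ∈ J then Y p (Sum.inr ⟨j, h⟩) else 0)
          * (q j - if r j ≤ v w then 1 else 0)
        = ∑ j ∈ J.attach, Y p (Sum.inr j) * (q j - if r j ≤ v w then 1 else 0) := by
      rw [← Finset.sum_attach J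
        (fun j => (if h : j ∈ J then Y p (Sum.inr ⟨j, h⟩) else 0)
          * (q j - if r j ≤ v w then 1 else 0))]
      refine Finset.sum_congr rfl fun j _ => ?_
      rw [dif_pos j.2]
    have eI : ∑ i ∈ I.attach, Y p (Sum.inl i) * (m i - v w ^ (i : ℕ))
        = ∑ i ∈ I.attach, m i * Y p (Sum.inl i)
          - ∑ i ∈ I.attach, v w ^ (i : ℕ) * Y p (Sum.inl i) := by
      rw [← Finset.sum_sub_distrib]
      refine Finset.sum_congr rfl fun i _ => ?_
      ring
    have eJ : ∑ j ∈ J.attach, Y p (Sum.inr j) * (q j - if r j ≤ v w then 1 else 0)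
        = ∑ j ∈ J.attach, q j * Y p (Sum.inr j)
          - ∑ j ∈ J.attach, (if r j ≤ v w then (1:ℝ) else 0) * Y p (Sum.inr j) := by
      rw [← Finset.sum_sub_distrib]
      refine Finset.sum_congr rfl fun j _ => ?_
      ring
    rw [cI, cJ]
    linarith [hA, hB, eI, eJ]
  · -- upper bound: weak duality
    rintro x ⟨φ, α, β, γ, hφ, ha, hb⟩
    have h1 : x ≤ worstRatio v F φ := by
      refine le_csInf (hMQ.image _) ?_
      rintro z ⟨f, hf, rfl⟩
      exact ratio_ge_of_feasible v hv0 I m J r q hf (hopt f hf) x φ α β γ hφ ha hb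
    have h2 : worstRatio v F φ ≤ thetaRatStar v F := by
      refine le_csSup ⟨1, ?_⟩ ⟨φ, hφ, rfl⟩
      rintro z ⟨ψ, hψ, rfl⟩
      exact worstRatio_le_one v F hv0 hFd hopt hMQ ψ hψ
    linarith
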